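/- Let n ≥ 6. The power graph of the symmetric group Sₙ contains an induced path on 5 vertices; explicitly in S₆ the elements (5 6)(1 2 3), (1 2 3), (1 2 3)(4 5), (4 5), (4 5)(1 2 6) form an induced P₅ (each consecutive pair adjacent via taking powers, all other pairs non-adjacent). -/

import Mathlib

def powerGraph (G : Type*) [Group G] : SimpleGraph G where
  Adj u v := u ≠ v ∧ (u ∈ Subgroup.zpowers v ∨ v ∈ Subgroup.zpowers u)
  symm := by
    constructor
    rintro u v ⟨h1, h2⟩
    exact ⟨h1.symm, h2.symm⟩
  loopless := by
    constructor
    rintro v ⟨h1, _⟩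
    exact h1 rfl

/-- `Γ` contains an induced path on 5 vertices. -/
def HasInducedP5 {V : Type*} (Γ : SimpleGraph V) : Prop :=
  ∃ a b c d e : V,
    a ≠ b ∧ a ≠ c ∧ a ≠ d ∧ a ≠ e ∧ b ≠ c ∧ b ≠ d ∧ b ≠ e ∧ c ≠ d ∧ c ≠ e ∧ d ≠ e ∧
    Γ.Adj a b ∧ Γ.Adj b c ∧ Γ.Adj c d ∧ Γ.Adj d e ∧
    ¬Γ.Adj a c ∧ ¬Γ.Adj a d ∧ ¬Γ.Adj a e ∧ ¬Γ.Adj b d ∧ ¬Γ.Adj b e ∧ ¬Γ.Adj c e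

/-- `Γ` contains an induced copy of `P₂ ∪ P₃`. -/
def HasInducedP2UnionP3 {V : Type*} (Γ : SimpleGraph V) : Prop :=
  ∃ a b c d e : V,
    a ≠ b ∧ a ≠ c ∧ a ≠ d ∧ a ≠ e ∧ b ≠ c ∧ b ≠ d ∧ b ≠ e ∧ c ≠ d ∧ c ≠ e ∧ d ≠ e ∧
    Γ.Adj a b ∧ Γ.Adj c d ∧ Γ.Adj d e ∧
    ¬Γ.Adj a c ∧ ¬Γ.Adj a d ∧ ¬Γ.Adj a e ∧ ¬Γ.Adj b c ∧ ¬Γ.Adj b d ∧ ¬Γ.Adj b e ∧ ¬Γ.Adj c e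

/-- `Γ` contains an induced diamond (`K₄` minus an edge). -/
def HasInducedDiamond {V : Type*} (Γ : SimpleGraph V) : Prop :=
  ∃ a b c d : V,
    a ≠ b ∧ a ≠ c ∧ a ≠ d ∧ b ≠ c ∧ b ≠ d ∧ c ≠ d ∧
    Γ.Adj a b ∧ Γ.Adj a c ∧ Γ.Adj b c ∧ Γ.Adj b d ∧ Γ.Adj c d ∧ ¬Γ.Adj a d

/-!
Membership in cyclic subgroups is preserved and reflected by injective homomorphisms, so the
power graph of `S₆` embeds as an induced subgraph into that of `Sₙ` for `n ≥ 6`, and it suffices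
to exhibit the path in `S₆`. There, adjacency is witnessed by explicit powers, and two
permutations each fixing a point the other moves cannot be adjacent, since powers of a
permutation fix what it fixes.
-/

open Equiv

section PowerGraph

variable {G H : Type*} [Group G] [Group H]

theorem powerGraph_adj_of_pow_eq {g h : G} (hne : g ≠ h) (k : ℕ) (hk : h ^ k = g) :
    (powerGraph G).Adj g h :=
  ⟨hne, Or.inl ⟨k, by simpa only [zpow_natCast] using hk⟩⟩

def powerGraphEmbedding (φ : G →* H) (hφ : Function.Injective φ) :
    powerGraph G ↪g powerGraph H where
  toFun := φ
  inj' := hφ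
  map_rel_iff' {x y} := by
    have hmem : ∀ a b : G, φ a ∈ Subgroup.zpowers (φ b) ↔ a ∈ Subgroup.zpowers b := fun a b => by
      rw [← MonoidHom.map_zpowers, Subgroup.mem_map_iff_mem hφ]
    simp only [Function.Embedding.coeFn_mk, powerGraph, hφ.ne_iff, hmem]

end PowerGraph

theorem HasInducedP5.map {V W : Type*} {Γ : SimpleGraph V} {Γ' : SimpleGraph W} (f : Γ ↪g Γ')
    (h : HasInducedP5 Γ) : HasInducedP5 Γ' := by
  obtain ⟨a, b, c, d, e, h⟩ := h
  exact ⟨f a, f b, f c, f d, f e, by simpa only [f.map_adj_iff, f.injective.ne_iff] using h⟩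

theorem Equiv.Perm.not_powerGraph_adj_of_exists_fixed {α : Type*} {g h : Perm α}
    (hfix : (∃ a, g a = a ∧ h a ≠ a) ∧ ∃ b, h b = b ∧ g b ≠ b) :
    ¬(powerGraph (Perm α)).Adj g h := by
  obtain ⟨⟨a, hga, hha⟩, ⟨b, hhb, hgb⟩⟩ := hfix
  rintro ⟨-, ⟨k, rfl⟩ | ⟨k, rfl⟩⟩
  · exact hgb (Perm.zpow_apply_eq_self_of_apply_eq_self hhb k)
  · exact hha (Perm.zpow_apply_eq_self_of_apply_eq_self hga k)

/-- The path of the statement, with the points `1, …, 6` renamed `0, …, 5`. -/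
theorem hasInducedP5_powerGraph_perm_fin_six : HasInducedP5 (powerGraph (Perm (Fin 6))) := by
  refine ⟨c[4, 5] * c[0, 1, 2], c[0, 1, 2], c[0, 1, 2] * c[3, 4], c[3, 4], c[3, 4] * c[0, 1, 5],
    by decide, by decide, by decide, by decide, by decide,
    by decide, by decide, by decide, by decide, by decide,
    (powerGraph_adj_of_pow_eq (by decide) 4 (by decide)).symm,
    powerGraph_adj_of_pow_eq (by decide) 4 (by decide),
    (powerGraph_adj_of_pow_eq (by decide) 3 (by decide)).symm,
    powerGraph_adj_of_pow_eq (by decide) 3 (by decide), ?_⟩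
  refine ⟨?_, ?_, ?_, ?_, ?_, ?_⟩ <;> exact Perm.not_powerGraph_adj_of_exists_fixed (by decide)

theorem Equiv.Perm.hasInducedP5_powerGraph {α : Type*} (ι : Fin 6 ↪ α) :
    HasInducedP5 (powerGraph (Perm α)) :=
  hasInducedP5_powerGraph_perm_fin_six.map
    (powerGraphEmbedding (Perm.viaEmbeddingHom ι) (Perm.viaEmbeddingHom_injective ι))

theorem symmetric_hasInducedP5 (n : ℕ) (hn : 6 ≤ n) :
    HasInducedP5 (powerGraph (Equiv.Perm (Fin n))) :=
  Perm.hasInducedP5_powerGraph (Fin.castLEEmb hn)
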